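/- For z = c + iγ with c > 0 and γ ∈ ℝ, and for a nonnegative bounded self-adjoint operator N on a Hilbert space, the operator 1 + z²N has a bounded inverse and ‖(1+z²N)^{−1}‖ ≤ 1 if |γ| ≤ c, and ‖(1+z²N)^{−1}‖ ≤ |z|²/(2c|γ|) if |γ| > c. -/

import Mathlib

/-!
By the continuous functional calculus, `(1 + z²N)⁻¹ = f(N)` with `f(λ) = (1 + z²λ)⁻¹`, and
`‖f(N)‖ ≤ sup_{λ ∈ σ(N)} |f(λ)|` with `σ(N) ⊆ [0, ∞)`. For real `t ≥ 0` and `w = z²`: if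
`Re w ≥ 0` then `|1 + wt| ≥ Re (1 + wt) ≥ 1`; in general
`|w| |1 + wt| ≥ |Im (w̄ (1 + wt))| = |Im w| = 2c|γ|`.
-/

open Complex ComplexConjugate ComplexOrder

theorem Complex.one_le_norm_one_add_mul_ofReal {w : ℂ} (hw : 0 ≤ w.re) {t : ℝ} (ht : 0 ≤ t) :
    1 ≤ ‖1 + w * t‖ :=
  calc (1 : ℝ) ≤ (1 + w * t).re := by simp; positivity
    _ ≤ ‖1 + w * t‖ := re_le_norm _

theorem Complex.abs_im_le_norm_mul_norm_one_add_mul_ofReal (w : ℂ) (t : ℝ) :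
    |w.im| ≤ ‖w‖ * ‖1 + w * t‖ :=
  calc |w.im| = |(conj w * (1 + w * t)).im| := by
        rw [mul_add, ← mul_assoc, conj_mul']; simp [← ofReal_pow]
    _ ≤ ‖conj w * (1 + w * t)‖ := abs_im_le_norm _
    _ = ‖w‖ * ‖1 + w * t‖ := by rw [norm_mul, norm_conj]

section CStarAlgebra

variable {A : Type*} [CStarAlgebra A]

theorem IsStarNormal.exists_inverse_one_add_smul_norm_le (a : A) [IsStarNormal a] (w : ℂ)
    {m : ℝ} (hm : 0 < m) (h : ∀ x ∈ spectrum ℂ a, m ≤ ‖1 + w * x‖) :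
    ∃ b : A, (1 + w • a) * b = 1 ∧ b * (1 + w • a) = 1 ∧ ‖b‖ ≤ m⁻¹ := by
  have hne : ∀ x ∈ spectrum ℂ a, 1 + w * x ≠ 0 := fun x hx h0 => by
    have := h x hx
    rw [h0, norm_zero] at this
    linarith
  have hcfc : cfc (fun x : ℂ => 1 + w * x) a = 1 + w • a := by
    rw [cfc_const_add (1 : ℂ) (fun x => w * x) a, cfc_const_mul w (fun x => x) a,
      cfc_id' ℂ a, Algebra.algebraMap_eq_smul_one, one_smul]
  let u := cfcUnits (fun x : ℂ => 1 + w * x) a hne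
  refine ⟨↑u⁻¹, hcfc ▸ u.mul_inv, hcfc ▸ u.inv_mul, ?_⟩
  refine norm_cfc_le (by positivity) fun x hx => ?_
  rw [norm_inv]
  exact inv_anti₀ hm (h x hx)

theorem exists_inverse_one_add_smul_norm_le_of_nonneg [PartialOrder A] [StarOrderedRing A]
    {a : A} (ha : 0 ≤ a) (w : ℂ) {m : ℝ} (hm : 0 < m)
    (h : ∀ t : ℝ, 0 ≤ t → m ≤ ‖1 + w * t‖) :
    ∃ b : A, (1 + w • a) * b = 1 ∧ b * (1 + w • a) = 1 ∧ ‖b‖ ≤ m⁻¹ := by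
  have : IsStarNormal a := (IsSelfAdjoint.of_nonneg ha).isStarNormal
  refine IsStarNormal.exists_inverse_one_add_smul_norm_le a w hm fun x hx => ?_
  obtain ⟨t, ht, rfl⟩ := RCLike.nonneg_iff_exists_ofReal.mp (spectrum_nonneg_of_nonneg ha hx)
  exact h t ht

end CStarAlgebra

/-- For `z = c + iγ` with `c > 0`, and `N` a bounded nonnegative self-adjoint
operator on a complex Hilbert space, `1 + z²N` has a bounded inverse with
`‖(1+z²N)⁻¹‖ ≤ 1` if `|γ| ≤ c` and `‖(1+z²N)⁻¹‖ ≤ |z|²/(2c|γ|)` if `|γ| > c`. -/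
theorem inverse_one_add_zsq_N_bound
    {H : Type*} [NormedAddCommGroup H] [InnerProductSpace ℂ H] [CompleteSpace H]
    (N : H →L[ℂ] H) (hN : N.IsPositive)
    (c γ : ℝ) (hc : 0 < c) (z : ℂ) (hz : z = Complex.mk c γ) :
    ∃ B : H →L[ℂ] H,
      (1 + z ^ 2 • N) * B = 1 ∧ B * (1 + z ^ 2 • N) = 1 ∧
      ((|γ| ≤ c → ‖B‖ ≤ 1) ∧
       (c < |γ| → ‖B‖ ≤ ‖z‖ ^ 2 / (2 * c * |γ|))) := by
  have hN0 : 0 ≤ N := (ContinuousLinearMap.nonneg_iff_isPositive N).mpr hN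
  have hre : (z ^ 2).re = c ^ 2 - γ ^ 2 := by subst hz; simp [sq]
  have him : |(z ^ 2).im| = 2 * c * |γ| := by
    have : (z ^ 2).im = 2 * c * γ := by subst hz; simp [sq]; ring
    rw [this, abs_mul, abs_mul, abs_two, abs_of_pos hc]
  rcases le_or_gt |γ| c with hγ | hγ
  · have hw : 0 ≤ (z ^ 2).re := by rw [hre, sub_nonneg, ← sq_abs γ]; gcongr
    obtain ⟨B, hAB, hBA, hB⟩ := exists_inverse_one_add_smul_norm_le_of_nonneg hN0 (z ^ 2)
      one_pos fun t ht => one_le_norm_one_add_mul_ofReal hw ht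
    exact ⟨B, hAB, hBA, fun _ => by simpa using hB, fun h => absurd hγ h.not_ge⟩
  · have hw : 0 < |(z ^ 2).im| := by rw [him]; have := hc.trans hγ; positivity
    have hz0 : 0 < ‖z ^ 2‖ := norm_pos_iff.mpr fun h0 => by simp [h0] at hw
    obtain ⟨B, hAB, hBA, hB⟩ := exists_inverse_one_add_smul_norm_le_of_nonneg hN0 (z ^ 2)
      (div_pos hw hz0) fun t _ =>
        (div_le_iff₀' hz0).mpr (abs_im_le_norm_mul_norm_one_add_mul_ofReal _ t)
    refine ⟨B, hAB, hBA, fun h => absurd hγ h.not_gt, fun _ => ?_⟩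
    rwa [inv_div, norm_pow, him] at hB
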